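/- Let m, N ≥ 1, h > 0, α ∈ [0,2π), ω = e^{iα}, and set α_k = (kπ + α/2)/N for k ∈ {0,…,N−1}. For Λ ∈ ℂ, there exists a nonzero z̃ ∈ W̃_ω with −J(z_{n+1} − z_n)/h = Λ·z̃_n for all n ∈ ℤ if and only if Λ ∈ {2 sin(α_k)/h : 0 ≤ k ≤ N−1} ∪ {−2 sin(α_k)/h : 0 ≤ k ≤ N−1}. -/

import Mathlib

/-!
Coordinatewise, the eigenvalue equation is the symplectic Euler scheme
`u n - u (n + 1) = a * v n`, `v (n + 1) - v n = a * u (n + 1)` with `a = hΛ`, whose transfer matrix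
has determinant `1` and trace `2 - a²`. Hence a nonzero `ω`-quasi-periodic solution exists iff some
`N`-th root `l` of `ω` solves `l² - (2 - a²) l + 1 = 0`. The `N`-th roots of `e^{iα}` are the
`e^{2iα_k}`, `k < N`, and for `l = e^{2iθ}` that equation reads `a² = (2 sin θ)²`.
-/

open Matrix

namespace DHS

/-- The ambient space of pairs of sequences `x, y : ℤ → ℂ^m`. -/
abbrev V (m : ℕ) := (ℤ → Fin m → ℂ) × (ℤ → Fin m → ℂ)

/-- The standard symplectic matrix `J = [[0, -I_m],[I_m, 0]]` in `m × m` blocks. -/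
def Jm (m : ℕ) : Matrix (Fin m ⊕ Fin m) (Fin m ⊕ Fin m) ℂ :=
  Matrix.fromBlocks 0 (-1) 1 0

/-- `z_n = (x_n, y_n) ∈ ℂ^{2m}`. -/
def zf {m : ℕ} (z : V m) (n : ℤ) : Fin m ⊕ Fin m → ℂ := Sum.elim (z.1 n) (z.2 n)

/-- `z̃_n = (x_{n+1}, y_n) ∈ ℂ^{2m}`. -/
def zt {m : ℕ} (z : V m) (n : ℤ) : Fin m ⊕ Fin m → ℂ := Sum.elim (z.1 (n + 1)) (z.2 n)

/-- The standard Hermitian product `⟨u, v⟩ = Σ_i u_i · conj (v_i)` on `ℂ^{2m}`. -/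
noncomputable def herm {α : Type} [Fintype α] (u v : α → ℂ) : ℂ :=
  ∑ i, u i * (starRingEnd ℂ) (v i)

/-- The space `W̃_ω` of pairs of sequences with `x_{n+N} = ω x_n`, `y_{n+N} = ω y_n`. -/
noncomputable def Wt (m N : ℕ) (ω : ℂ) : Submodule ℂ (V m) where
  carrier := {z | ∀ n : ℤ, z.1 (n + (N : ℤ)) = ω • z.1 n ∧ z.2 (n + (N : ℤ)) = ω • z.2 n}
  add_mem' := by
    intro a b ha hb n
    refine ⟨?_, ?_⟩
    · show (a.1 + b.1) (n + (N : ℤ)) = ω • (a.1 + b.1) n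
      simp [Pi.add_apply, (ha n).1, (hb n).1, smul_add]
    · show (a.2 + b.2) (n + (N : ℤ)) = ω • (a.2 + b.2) n
      simp [Pi.add_apply, (ha n).2, (hb n).2, smul_add]
  zero_mem' := by intro n; simp
  smul_mem' := by
    intro c a ha n
    refine ⟨?_, ?_⟩
    · show (c • a.1) (n + (N : ℤ)) = ω • (c • a.1) n
      simp [Pi.smul_apply, (ha n).1, smul_comm c ω]
    · show (c • a.2) (n + (N : ℤ)) = ω • (c • a.2) n
      simp [Pi.smul_apply, (ha n).2, smul_comm c ω]

/-- The form `𝒜_{h,ω}(z̃, w̃) = Σ_{n=1}^{N} [⟨−J(z_{n+1}−z_n)/h, w̃_n⟩ − ⟨B_n z̃_n, w̃_n⟩]`. -/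
noncomputable def Aform (m N : ℕ) (h : ℝ)
    (B : ℤ → Matrix (Fin m ⊕ Fin m) (Fin m ⊕ Fin m) ℝ) (z w : V m) : ℂ :=
  ∑ n ∈ Finset.Icc (1 : ℤ) (N : ℤ),
    (herm (((h : ℂ))⁻¹ • ((-(Jm m)).mulVec (zf z (n + 1) - zf z n))) (zt w n)
      - herm (((B n).map (fun x => (x : ℂ))).mulVec (zt z n)) (zt w n))

lemma herm_add_left {α : Type} [Fintype α] (u v w : α → ℂ) :
    herm (u + v) w = herm u w + herm v w := by
  simp [herm, add_mul, Finset.sum_add_distrib]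

lemma herm_smul_left {α : Type} [Fintype α] (c : ℂ) (u w : α → ℂ) :
    herm (c • u) w = c * herm u w := by
  simp [herm, Finset.mul_sum, mul_assoc]

lemma herm_zero_left {α : Type} [Fintype α] (w : α → ℂ) : herm 0 w = 0 := by
  simp [herm]

lemma zf_add {m : ℕ} (a b : V m) (n : ℤ) : zf (a + b) n = zf a n + zf b n := by
  funext i; cases i <;> rfl

lemma zf_smul {m : ℕ} (c : ℂ) (a : V m) (n : ℤ) : zf (c • a) n = c • zf a n := by
  funext i; cases i <;> rfl

lemma zf_zero {m : ℕ} (n : ℤ) : zf (0 : V m) n = 0 := by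
  funext i; cases i <;> rfl

lemma zt_add {m : ℕ} (a b : V m) (n : ℤ) : zt (a + b) n = zt a n + zt b n := by
  funext i; cases i <;> rfl

lemma zt_smul {m : ℕ} (c : ℂ) (a : V m) (n : ℤ) : zt (c • a) n = c • zt a n := by
  funext i; cases i <;> rfl

lemma zt_zero {m : ℕ} (n : ℤ) : zt (0 : V m) n = 0 := by
  funext i; cases i <;> rfl

lemma Aform_add_left (m N : ℕ) (h : ℝ)
    (B : ℤ → Matrix (Fin m ⊕ Fin m) (Fin m ⊕ Fin m) ℝ) (a b w : V m) :
    Aform m N h B (a + b) w = Aform m N h B a w + Aform m N h B b w := by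
  unfold Aform
  rw [← Finset.sum_add_distrib]
  refine Finset.sum_congr rfl fun n _ => ?_
  rw [zf_add, zf_add, zt_add, add_sub_add_comm, Matrix.mulVec_add, smul_add, herm_add_left,
    Matrix.mulVec_add, herm_add_left]
  ring

lemma Aform_smul_left (m N : ℕ) (h : ℝ)
    (B : ℤ → Matrix (Fin m ⊕ Fin m) (Fin m ⊕ Fin m) ℝ) (c : ℂ) (a w : V m) :
    Aform m N h B (c • a) w = c * Aform m N h B a w := by
  unfold Aform
  rw [Finset.mul_sum]
  refine Finset.sum_congr rfl fun n _ => ?_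
  rw [zf_smul, zf_smul, zt_smul, ← smul_sub]
  simp only [Matrix.mulVec_smul, smul_comm ((h : ℂ))⁻¹ c, herm_smul_left]
  ring

lemma Aform_zero_left (m N : ℕ) (h : ℝ)
    (B : ℤ → Matrix (Fin m ⊕ Fin m) (Fin m ⊕ Fin m) ℝ) (w : V m) :
    Aform m N h B (0 : V m) w = 0 := by
  unfold Aform
  refine Finset.sum_eq_zero fun n _ => ?_
  rw [zf_zero, zf_zero, zt_zero]
  simp [herm_zero_left]

/-- The null space `{z̃ ∈ W̃_ω : 𝒜_{h,ω}(z̃, w̃) = 0 for all w̃ ∈ W̃_ω}`. -/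
noncomputable def nullSp (m N : ℕ) (h : ℝ) (ω : ℂ)
    (B : ℤ → Matrix (Fin m ⊕ Fin m) (Fin m ⊕ Fin m) ℝ) : Submodule ℂ (V m) where
  carrier := {z | z ∈ Wt m N ω ∧ ∀ w ∈ Wt m N ω, Aform m N h B z w = 0}
  add_mem' := by
    intro a b ha hb
    exact ⟨(Wt m N ω).add_mem ha.1 hb.1, fun w hw => by
      rw [Aform_add_left, ha.2 w hw, hb.2 w hw, add_zero]⟩
  zero_mem' := ⟨(Wt m N ω).zero_mem, fun w _ => Aform_zero_left m N h B w⟩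
  smul_mem' := by
    intro c a ha
    exact ⟨(Wt m N ω).smul_mem c ha.1, fun w hw => by
      rw [Aform_smul_left, ha.2 w hw, mul_zero]⟩

/-- `m⁰_{h,ω}`: the dimension of the null space of `𝒜_{h,ω}`. -/
noncomputable def mZero (m N : ℕ) (h : ℝ) (ω : ℂ)
    (B : ℤ → Matrix (Fin m ⊕ Fin m) (Fin m ⊕ Fin m) ℝ) : ℕ :=
  Module.finrank ℂ ↥(nullSp m N h ω B)

/-- `m⁺_{h,ω}`: the maximal dimension of a complex subspace of `W̃_ω` on which
`z̃ ↦ 𝒜_{h,ω}(z̃, z̃)` is positive definite. -/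
noncomputable def mPlus (m N : ℕ) (h : ℝ) (ω : ℂ)
    (B : ℤ → Matrix (Fin m ⊕ Fin m) (Fin m ⊕ Fin m) ℝ) : ℕ :=
  sSup {d : ℕ | ∃ S : Submodule ℂ (V m), S ≤ Wt m N ω ∧ Module.finrank ℂ ↥S = d ∧
    ∀ z ∈ S, z ≠ 0 → 0 < (Aform m N h B z z).re}

/-- `m⁻_{h,ω}`: the maximal dimension of a complex subspace of `W̃_ω` on which
`z̃ ↦ 𝒜_{h,ω}(z̃, z̃)` is negative definite. -/
noncomputable def mMinus (m N : ℕ) (h : ℝ) (ω : ℂ)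
    (B : ℤ → Matrix (Fin m ⊕ Fin m) (Fin m ⊕ Fin m) ℝ) : ℕ :=
  sSup {d : ℕ | ∃ S : Submodule ℂ (V m), S ≤ Wt m N ω ∧ Module.finrank ℂ ↥S = d ∧
    ∀ z ∈ S, z ≠ 0 → (Aform m N h B z z).re < 0}

section QuasiPeriodic

variable {R : Type*} [CommRing R] [IsDomain R]

def QuasiPeriodic (N : ℕ) (ω : R) (u : ℤ → R) : Prop :=
  ∀ n : ℤ, u (n + N) = ω * u n

lemma QuasiPeriodic.pow_eq_of_geometric {N : ℕ} {ω r : R} {f : ℤ → R}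
    (hper : QuasiPeriodic N ω f) (hf : ∀ n, f (n + 1) = r * f n) {n₀ : ℤ} (h₀ : f n₀ ≠ 0) :
    r ^ N = ω := by
  have hpow : ∀ k : ℕ, f (n₀ + k) = r ^ k * f n₀ := by
    intro k
    induction k with
    | zero => simp
    | succ k ih => rw [Nat.cast_succ, ← add_assoc, hf, ih, pow_succ]; ring
  exact mul_right_cancel₀ h₀ ((hpow N).symm.trans (hper n₀))

/-- `n ↦ u (n + 1) - l₁ u n` is geometric with ratio `l₂`; if it vanishes, `u` is geometric with
ratio `l₁`. -/
lemma QuasiPeriodic.pow_eq_or_pow_eq_of_recurrence {N : ℕ} {ω l₁ l₂ : R} {u : ℤ → R}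
    (hper : QuasiPeriodic N ω u)
    (hrec : ∀ n, u (n + 2) = (l₁ + l₂) * u (n + 1) - l₁ * l₂ * u n) (hu : u ≠ 0) :
    l₁ ^ N = ω ∨ l₂ ^ N = ω := by
  by_cases hw : ∀ n, u (n + 1) - l₁ * u n = 0
  · obtain ⟨n₀, h₀⟩ := Function.ne_iff.mp hu
    exact Or.inl (hper.pow_eq_of_geometric (fun n => by linear_combination hw n) h₀)
  · obtain ⟨n₀, h₀⟩ := not_forall.mp hw
    refine Or.inr (QuasiPeriodic.pow_eq_of_geometric (f := fun n => u (n + 1) - l₁ * u n)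
      (fun n => ?_) (fun n => ?_) h₀) <;> beta_reduce
    · rw [add_right_comm, hper, hper]; ring
    · rw [add_assoc, one_add_one_eq_two, hrec]; ring

end QuasiPeriodic

lemma exists_add_eq_and_mul_eq_one {K : Type*} [Field K] [IsAlgClosed K] (t : K) :
    ∃ l₁ l₂ : K, l₁ + l₂ = t ∧ l₁ * l₂ = 1 := by
  open Polynomial in
  obtain ⟨l, hl⟩ := IsAlgClosed.exists_root (X ^ 2 - C t * X + 1 : K[X])
    (by rw [show (X ^ 2 - C t * X + 1 : K[X]).degree = 2 by compute_degree!]; decide)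
  refine ⟨l, t - l, by ring, ?_⟩
  simp only [IsRoot, eval_add, eval_sub, eval_pow, eval_mul, eval_C, eval_X, eval_one] at hl
  linear_combination -hl

section SymplecticEuler

variable {K : Type*} [Field K]

/-- The eigenvalue equation `−J(z_{n+1} − z_n) = a z̃_n` for `m = 1`, with `z_n = (u n, v n)`. -/
def IsSymplecticEulerSolution (a : K) (u v : ℤ → K) : Prop :=
  ∀ n : ℤ, v (n + 1) - v n = a * u (n + 1) ∧ u n - u (n + 1) = a * v n

namespace IsSymplecticEulerSolution

variable {a : K} {u v : ℤ → K}

lemma fst_recurrence (hs : IsSymplecticEulerSolution a u v) (n : ℤ) :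
    u (n + 2) = (2 - a ^ 2) * u (n + 1) - u n := by
  have hnext := (hs (n + 1)).2
  rw [add_assoc, one_add_one_eq_two] at hnext
  linear_combination -hnext - a * (hs n).1 + (hs n).2

lemma snd_recurrence (hs : IsSymplecticEulerSolution a u v) (n : ℤ) :
    v (n + 2) = (2 - a ^ 2) * v (n + 1) - v n := by
  have hnext := hs (n + 1)
  rw [add_assoc, one_add_one_eq_two] at hnext
  linear_combination hnext.1 - a * hnext.2 - (hs n).1

lemma exists_pow_eq [IsAlgClosed K] {N : ℕ} {ω : K} (hs : IsSymplecticEulerSolution a u v)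
    (hu : QuasiPeriodic N ω u) (hv : QuasiPeriodic N ω v) (hne : u ≠ 0 ∨ v ≠ 0) :
    ∃ l : K, l ^ N = ω ∧ l ^ 2 - (2 - a ^ 2) * l + 1 = 0 := by
  obtain ⟨l₁, l₂, hsum, hprod⟩ := exists_add_eq_and_mul_eq_one (2 - a ^ 2)
  have hrec : ∀ w : ℤ → K, (∀ n, w (n + 2) = (2 - a ^ 2) * w (n + 1) - w n) →
      ∀ n, w (n + 2) = (l₁ + l₂) * w (n + 1) - l₁ * l₂ * w n := by
    intro w hw n
    rw [hsum, hprod, one_mul, hw]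
  have hroot : l₁ ^ N = ω ∨ l₂ ^ N = ω := by
    rcases hne with hne | hne
    · exact hu.pow_eq_or_pow_eq_of_recurrence (hrec u hs.fst_recurrence) hne
    · exact hv.pow_eq_or_pow_eq_of_recurrence (hrec v hs.snd_recurrence) hne
  rcases hroot with h | h
  · exact ⟨l₁, h, by linear_combination l₁ * hsum - hprod⟩
  · exact ⟨l₂, h, by linear_combination l₂ * hsum - hprod⟩

end IsSymplecticEulerSolution

lemma isSymplecticEulerSolution_zpow_mul {a l c d : K} (hl : l ≠ 0)
    (h₁ : d * (l - 1) = a * c * l) (h₂ : c * (1 - l) = a * d) :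
    IsSymplecticEulerSolution a (fun n => l ^ n * c) (fun n => l ^ n * d) := by
  intro n
  simp only [zpow_add_one₀ hl]
  constructor
  · linear_combination l ^ n * h₁
  · linear_combination l ^ n * h₂

lemma quasiPeriodic_zpow_mul {N : ℕ} {l : K} (hl : l ≠ 0) (c : K) :
    QuasiPeriodic N (l ^ N) (fun n => l ^ n * c) := by
  intro n
  simp only [zpow_add₀ hl, zpow_natCast]
  ring

theorem exists_quasiPeriodic_solution_iff [IsAlgClosed K] {N : ℕ} {ω a : K} :
    (∃ u v : ℤ → K, (u ≠ 0 ∨ v ≠ 0) ∧ QuasiPeriodic N ω u ∧ QuasiPeriodic N ω v ∧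
      IsSymplecticEulerSolution a u v) ↔
    ∃ l : K, l ^ N = ω ∧ l ^ 2 - (2 - a ^ 2) * l + 1 = 0 := by
  refine ⟨fun ⟨u, v, hne, hu, hv, hs⟩ => hs.exists_pow_eq hu hv hne, ?_⟩
  rintro ⟨l, rfl, hchar⟩
  have hl : l ≠ 0 := by rintro rfl; norm_num at hchar
  -- an eigenvector `(c, d)` of the transfer matrix `(u n, v n) ↦ (u (n + 1), v (n + 1))` for `l`
  obtain ⟨c, d, hc, h₁, h₂⟩ : ∃ c d : K, c ≠ 0 ∧ d * (l - 1) = a * c * l ∧ c * (1 - l) = a * d := by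
    by_cases ha : a = 0
    · have hl1 : l = 1 := by
        subst ha
        exact sub_eq_zero.mp (pow_eq_zero_iff two_ne_zero |>.mp (by linear_combination hchar))
      exact ⟨1, 0, one_ne_zero, by simp [ha, hl1], by simp [ha, hl1]⟩
    · exact ⟨a, 1 - l, ha, by linear_combination -hchar, by ring⟩
  exact ⟨_, _, Or.inl (Function.ne_iff.mpr ⟨0, by simpa using hc⟩), quasiPeriodic_zpow_mul hl c,
    quasiPeriodic_zpow_mul hl d, isSymplecticEulerSolution_zpow_mul hl h₁ h₂⟩

end SymplecticEuler

section Complex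

open Complex

noncomputable def alphaK (N : ℕ) (α : ℝ) (k : ℕ) : ℝ := (k * Real.pi + α / 2) / N

lemma pow_eq_exp_iff {N : ℕ} (hN : N ≠ 0) (α : ℝ) (l : ℂ) :
    l ^ N = exp (I * α) ↔ ∃ k < N, l = exp (2 * alphaK N α k * I) := by
  have hNC : (N : ℂ) ≠ 0 := Nat.cast_ne_zero.mpr hN
  constructor
  · intro hl
    have : NeZero N := ⟨hN⟩
    have hroot : (l / exp (I * α / N)) ^ N = 1 := by
      rw [div_pow, hl, ← exp_nat_mul, mul_div_cancel₀ _ hNC, div_self (exp_ne_zero _)]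
    obtain ⟨k, hk, hζ⟩ := (isPrimitiveRoot_exp N hN).eq_pow_of_pow_eq_one hroot
    refine ⟨k, hk, ?_⟩
    rw [eq_div_iff (exp_ne_zero _), ← exp_nat_mul, ← exp_add] at hζ
    rw [← hζ, alphaK]
    congr 1
    push_cast
    field_simp
  · rintro ⟨k, -, rfl⟩
    rw [← exp_nat_mul, alphaK,
      show (N : ℂ) * (2 * ((k * Real.pi + α / 2) / N : ℝ) * I) = I * α + k * (2 * Real.pi * I) by
        push_cast; field_simp; ring,
      exp_add, exp_nat_mul_two_pi_mul_I, mul_one]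

lemma exists_pow_eq_exp_and_iff {N : ℕ} (hN : N ≠ 0) (α : ℝ) (P : ℂ → Prop) :
    (∃ l, l ^ N = exp (I * α) ∧ P l) ↔ ∃ k < N, P (exp (2 * alphaK N α k * I)) := by
  simp only [pow_eq_exp_iff hN]
  constructor
  · rintro ⟨_, ⟨k, hk, rfl⟩, hP⟩
    exact ⟨k, hk, hP⟩
  · rintro ⟨k, hk, hP⟩
    exact ⟨_, ⟨k, hk, rfl⟩, hP⟩

lemma exp_two_mul_sq_sub_add_eq_zero_iff (a : ℂ) (θ : ℝ) :
    exp (2 * θ * I) ^ 2 - (2 - a ^ 2) * exp (2 * θ * I) + 1 = 0 ↔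
      a ^ 2 = ((2 * Real.sin θ : ℝ) : ℂ) ^ 2 := by
  have hμ : exp (θ * I) ≠ 0 := exp_ne_zero _
  have hsq : exp (2 * θ * I) = exp (θ * I) ^ 2 := by rw [← exp_nat_mul]; ring_nf
  have hsin : ((2 * Real.sin θ : ℝ) : ℂ) = ((exp (θ * I))⁻¹ - exp (θ * I)) * I := by
    rw [ofReal_mul, ofReal_sin, ofReal_ofNat, two_sin, neg_mul, exp_neg]
  have hfactor : exp (2 * θ * I) ^ 2 - (2 - a ^ 2) * exp (2 * θ * I) + 1 =
      exp (θ * I) ^ 2 * (a ^ 2 - ((2 * Real.sin θ : ℝ) : ℂ) ^ 2) := by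
    rw [hsq, hsin, mul_pow, I_sq]
    field_simp
    ring
  rw [hfactor, mul_eq_zero, sub_eq_zero, or_iff_right (pow_ne_zero 2 hμ)]

lemma mul_sq_eq_ofReal_sq_iff {h b : ℝ} (hh : h ≠ 0) (Λ : ℂ) :
    ((h : ℂ) * Λ) ^ 2 = (b : ℂ) ^ 2 ↔ Λ = ((b / h : ℝ) : ℂ) ∨ Λ = ((-b / h : ℝ) : ℂ) := by
  have hh' : (h : ℂ) ≠ 0 := ofReal_ne_zero.mpr hh
  rw [sq_eq_sq_iff_eq_or_eq_neg]
  push_cast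
  rw [eq_div_iff hh', eq_div_iff hh', mul_comm Λ]

end Complex

lemma neg_Jm_mulVec {m : ℕ} (u v : Fin m → ℂ) :
    (-(Jm m)) *ᵥ Sum.elim u v = Sum.elim v (-u) := by
  rw [Jm, fromBlocks_neg, fromBlocks_mulVec]
  simp [neg_mulVec]

lemma eigen_equation_iff {m : ℕ} {h : ℝ} (hh : (h : ℂ) ≠ 0) (Λ : ℂ) (z : V m) (n : ℤ) :
    (h : ℂ)⁻¹ • ((-(Jm m)).mulVec (zf z (n + 1) - zf z n)) = Λ • zt z n ↔
      ∀ i, z.2 (n + 1) i - z.2 n i = h * Λ * z.1 (n + 1) i ∧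
        z.1 n i - z.1 (n + 1) i = h * Λ * z.2 n i := by
  rw [zf, zf, ← Sum.elim_sub_sub, neg_Jm_mulVec, funext_iff, Sum.forall, ← forall_and]
  simp [zt, inv_mul_eq_iff_eq_mul₀ hh, mul_assoc]

lemma mem_Wt_iff {m N : ℕ} {ω : ℂ} {z : V m} :
    z ∈ Wt m N ω ↔
      ∀ i, QuasiPeriodic N ω (fun n => z.1 n i) ∧ QuasiPeriodic N ω (fun n => z.2 n i) := by
  show (∀ n : ℤ, _ ∧ _) ↔ _
  simp only [QuasiPeriodic, funext_iff, Pi.smul_apply, smul_eq_mul, forall_and]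
  exact and_congr forall_comm forall_comm

lemma exists_eigenvector_iff {m N : ℕ} (hm : 1 ≤ m) {h : ℝ} (hh : (h : ℂ) ≠ 0) (ω Λ : ℂ) :
    (∃ z : V m, z ∈ Wt m N ω ∧ z ≠ 0 ∧
      ∀ n : ℤ, (h : ℂ)⁻¹ • ((-(Jm m)).mulVec (zf z (n + 1) - zf z n)) = Λ • zt z n) ↔
    ∃ u v : ℤ → ℂ, (u ≠ 0 ∨ v ≠ 0) ∧ QuasiPeriodic N ω u ∧ QuasiPeriodic N ω v ∧
      IsSymplecticEulerSolution (h * Λ) u v := by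
  simp_rw [eigen_equation_iff hh]
  constructor
  · rintro ⟨z, hzW, hz, hs⟩
    obtain ⟨n, i, hi⟩ : ∃ n i, z.1 n i ≠ 0 ∨ z.2 n i ≠ 0 := by
      by_contra! hzero
      exact hz (Prod.ext (funext₂ fun n i => (hzero n i).1) (funext₂ fun n i => (hzero n i).2))
    exact ⟨fun n => z.1 n i, fun n => z.2 n i,
      hi.imp (fun hi => Function.ne_iff.mpr ⟨n, hi⟩) (fun hi => Function.ne_iff.mpr ⟨n, hi⟩),
      (mem_Wt_iff.mp hzW i).1, (mem_Wt_iff.mp hzW i).2, fun n => hs n i⟩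
  · rintro ⟨u, v, hne, hu, hv, hs⟩
    set e : Fin m → ℂ := Pi.single ⟨0, hm⟩ 1
    refine ⟨(fun n => u n • e, fun n => v n • e), ?_, ?_, fun n i => ?_⟩
    · refine mem_Wt_iff.mpr fun i => ⟨fun n => ?_, fun n => ?_⟩ <;>
        simp only [Pi.smul_apply, smul_eq_mul, hu n, hv n, mul_assoc]
    · intro hz
      have hzero : ∀ n, u n = 0 ∧ v n = 0 := fun n => by
        simpa [e] using
          And.intro (congrFun (congrFun (congrArg Prod.fst hz) n) ⟨0, hm⟩)
            (congrFun (congrFun (congrArg Prod.snd hz) n) ⟨0, hm⟩)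
      exact hne.elim (· (funext fun n => (hzero n).1)) (· (funext fun n => (hzero n).2))
    · simp only [Pi.smul_apply, smul_eq_mul]
      constructor
      · linear_combination e i * (hs n).1
      · linear_combination e i * (hs n).2

theorem stmt10_general (m N : ℕ) (hm : 1 ≤ m) (hN : 1 ≤ N) (h : ℝ) (hh : 0 < h)
    (α : ℝ)
    (ω : ℂ) (hωα : ω = Complex.exp (Complex.I * α)) (Λ : ℂ) :
    (∃ z : V m, z ∈ Wt m N ω ∧ z ≠ 0 ∧
      ∀ n : ℤ, (h : ℂ)⁻¹ • ((-(Jm m)).mulVec (zf z (n + 1) - zf z n)) = Λ • zt z n) ↔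
    (∃ k : ℕ, k < N ∧
      (Λ = ((2 * Real.sin (((k : ℝ) * Real.pi + α / 2) / N) / h : ℝ) : ℂ) ∨
       Λ = ((-(2 * Real.sin (((k : ℝ) * Real.pi + α / 2) / N)) / h : ℝ) : ℂ))) := by
  rw [exists_eigenvector_iff hm (Complex.ofReal_ne_zero.mpr hh.ne'),
    exists_quasiPeriodic_solution_iff, hωα,
    exists_pow_eq_exp_and_iff (Nat.one_le_iff_ne_zero.mp hN)]
  simp only [exp_two_mul_sq_sub_add_eq_zero_iff, mul_sq_eq_ofReal_sq_iff hh.ne', alphaK]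

/-- `Λ` is an eigenvalue of the operator `z̃ ↦ −J(z_{n+1}−z_n)/h` on `W̃_ω`
iff `Λ = ±2 sin(α_k)/h` for some `0 ≤ k ≤ N−1`, where `α_k = (kπ + α/2)/N`. -/
theorem stmt10 (m N : ℕ) (hm : 1 ≤ m) (hN : 1 ≤ N) (h : ℝ) (hh : 0 < h)
    (α : ℝ) (hα : α ∈ Set.Ico (0 : ℝ) (2 * Real.pi))
    (ω : ℂ) (hωα : ω = Complex.exp (Complex.I * α)) (Λ : ℂ) :
    (∃ z : V m, z ∈ Wt m N ω ∧ z ≠ 0 ∧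
      ∀ n : ℤ, (h : ℂ)⁻¹ • ((-(Jm m)).mulVec (zf z (n + 1) - zf z n)) = Λ • zt z n) ↔
    (∃ k : ℕ, k < N ∧
      (Λ = ((2 * Real.sin (((k : ℝ) * Real.pi + α / 2) / N) / h : ℝ) : ℂ) ∨
       Λ = ((-(2 * Real.sin (((k : ℝ) * Real.pi + α / 2) / N)) / h : ℝ) : ℂ))) :=
  stmt10_general m N hm hN h hh α ω hωα Λ

end DHS
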